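/- The formula φ → (∘(φ→ψ) → (∘φ → ∘ψ)) is valid on every frame under the reflexive-insensitive semantics. -/
import Mathlib

/-- Formulas of the language L∘. -/
inductive RIForm : Type where
  | var : Nat → RIForm
  | neg : RIForm → RIForm
  | and : RIForm → RIForm → RIForm
  | circ : RIForm → RIForm
deriving DecidableEq

def RIForm.imp (φ ψ : RIForm) : RIForm := .neg (.and φ (.neg ψ))
def RIForm.or (φ ψ : RIForm) : RIForm := .neg (.and (.neg φ) (.neg ψ))
def RIForm.top : RIForm := .neg (.and (.var 0) (.neg (.var 0)))
def RIForm.bot : RIForm := .and (.var 0) (.neg (.var 0))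
def RIForm.iff (φ ψ : RIForm) : RIForm := .and (φ.imp ψ) (ψ.imp φ)

/-- Reflexive-insensitive satisfaction. -/
def riSat {W : Type} (R : W → W → Prop) (V : Nat → W → Prop) : W → RIForm → Prop
  | w, .var p => V p w
  | w, .neg φ => ¬ riSat R V w φ
  | w, .and φ ψ => riSat R V w φ ∧ riSat R V w ψ
  | w, .circ φ => ¬ riSat R V w φ ∨ ∀ x, R w x → riSat R V x φ

/-- Validity on a frame under the reflexive-insensitive semantics. -/
def riValid {W : Type} (R : W → W → Prop) (φ : RIForm) : Prop :=
  ∀ V w, riSat R V w φ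

theorem valid_circ_K_under_phi (φ ψ : RIForm) :
    ∀ (W : Type) (R : W → W → Prop),
      riValid R (φ.imp ((RIForm.circ (φ.imp ψ)).imp
        ((RIForm.circ φ).imp (.circ ψ)))) := by
  intro W R V w
  simp only [RIForm.imp, riSat, not_and, not_not]
  intro hφ hcirc hcφ
  rcases hcirc with h | h
  · simp [riSat, hφ] at h
    left; exact h
  · rcases hcφ with h2 | h2
    · exact absurd hφ h2
    · by_cases hψ : riSat R V w ψ
      · right; intro x hx
        have := h x hx
        exact this (h2 x hx)
      · left; exact hψ
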